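/- Let g be a Lipschitz function defined on an open set Ω ⊆ ℝ^N and let x ∈ Ω. If f ∈ Tan(g,x) and h ∈ Tan(f,0), then h ∈ Tan(g,x). Here Tan(g,x) denotes the set of blowups of g at x, i.e. all uniform limits on the closed unit ball of the rescaled functions y ↦ (g(x+ry) − g(x))/r as r → 0 along subsequences. -/
import Mathlib


open Filter Metric MeasureTheory

/-- The set of blowups (tangent functions) of `g` at `x`: all uniform limits on the
closed unit ball of `y ↦ (g (x + r y) - g x) / r` along sequences `r_j ↘ 0`. -/
def TanSet {N : ℕ} (g : EuclideanSpace ℝ (Fin N) → ℝ) (x : EuclideanSpace ℝ (Fin N)) :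
    Set (EuclideanSpace ℝ (Fin N) → ℝ) :=
  {f | ∃ r : ℕ → ℝ, (∀ j, 0 < r j) ∧ Tendsto r atTop (nhds 0) ∧
    TendstoUniformlyOn (fun j y => (g (x + r j • y) - g x) / r j) f atTop
      (Metric.closedBall 0 1)}

/-- If `f ∈ Tan(g,x)` and `h ∈ Tan(f,0)`, then `h ∈ Tan(g,x)`. -/
theorem stmt_0 {N : ℕ} (Ω : Set (EuclideanSpace ℝ (Fin N))) (hΩ : IsOpen Ω)
    (g : EuclideanSpace ℝ (Fin N) → ℝ) (K : NNReal) (hg : LipschitzOnWith K g Ω)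
    (x : EuclideanSpace ℝ (Fin N)) (hx : x ∈ Ω)
    (f h : EuclideanSpace ℝ (Fin N) → ℝ)
    (hf : f ∈ TanSet g x) (hh : h ∈ TanSet f 0) : h ∈ TanSet g x := by
  obtain ⟨r, hrpos, hr0, hrU⟩ := hf
  obtain ⟨s, hspos, hs0, hsU⟩ := hh
  -- f 0 = 0
  have hf0 : f 0 = 0 := by
    have h1 := hrU.tendsto_at (mem_closedBall_self zero_le_one)
    have h2 : (fun j => (g (x + r j • (0 : EuclideanSpace ℝ (Fin N))) - g x) / r j)
        = fun _ => (0 : ℝ) := by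
      funext j; simp
    rw [h2] at h1
    exact tendsto_nhds_unique h1 tendsto_const_nhds
  -- diagonal choice
  have hfil : ∀ k : ℕ, ∃ j : ℕ,
      (∀ y ∈ Metric.closedBall (0 : EuclideanSpace ℝ (Fin N)) 1,
        dist (f y) ((g (x + r j • y) - g x) / r j) < s k / (k + 1)) ∧ r j < 1 / (k + 1) := by
    intro k
    have hpos : (0 : ℝ) < s k / (k + 1) := div_pos (hspos k) (by positivity)
    have e1 := Metric.tendstoUniformlyOn_iff.mp hrU _ hpos
    have e2 : ∀ᶠ j in atTop, r j < 1 / (k + 1) :=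
      hr0.eventually (gt_mem_nhds (by positivity))
    exact (e1.and e2).exists
  choose j hj1 hj2 using hfil
  refine ⟨fun k => r (j k) * s k, fun k => mul_pos (hrpos _) (hspos _), ?_, ?_⟩
  · -- tendsto 0
    have hb : ∀ k : ℕ, ‖r (j k) * s k‖ ≤ s k := by
      intro k
      have h1 : 0 < r (j k) := hrpos _
      have h2 : 0 < s k := hspos _
      rw [Real.norm_eq_abs, abs_of_pos (mul_pos h1 h2)]
      have : r (j k) ≤ 1 := by
        have := hj2 k
        have h3 : (1 : ℝ) / (k + 1) ≤ 1 := by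
          rw [div_le_one (by positivity)]; linarith [Nat.cast_nonneg (α := ℝ) k]
        linarith
      nlinarith
    have := squeeze_zero_norm hb hs0
    simpa using this
  · rw [Metric.tendstoUniformlyOn_iff]
    intro ε hε
    have e1 := Metric.tendstoUniformlyOn_iff.mp hsU (ε / 2) (by positivity)
    have e2 : ∀ᶠ k in atTop, s k < 1 :=
      hs0.eventually (gt_mem_nhds one_pos)
    have e3 : ∀ᶠ k : ℕ in atTop, (1 : ℝ) / (k + 1) < ε / 2 := by
      have : Tendsto (fun k : ℕ => (1 : ℝ) / (k + 1)) atTop (nhds 0) :=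
        tendsto_one_div_add_atTop_nhds_zero_nat
      exact this.eventually (gt_mem_nhds (by positivity))
    filter_upwards [e1, e2, e3] with k hk1 hk2 hk3
    intro y hy
    have hsk : 0 < s k := hspos _
    have hmem : s k • y ∈ Metric.closedBall (0 : EuclideanSpace ℝ (Fin N)) 1 := by
      rw [mem_closedBall_zero_iff] at hy ⊢
      rw [norm_smul, Real.norm_eq_abs, abs_of_pos hsk]
      nlinarith
    -- first term
    have ht1 : dist (h y) ((f (0 + s k • y) - f 0) / s k) < ε / 2 := hk1 y hy
    rw [hf0, zero_add, sub_zero] at ht1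
    -- second term
    have ht2 := hj1 k _ hmem
    have key : (g (x + (r (j k) * s k) • y) - g x) / (r (j k) * s k)
        = ((g (x + r (j k) • (s k • y)) - g x) / r (j k)) / s k := by
      rw [smul_smul, div_div]
    have ht2' : dist (f (s k • y) / s k)
        ((g (x + (r (j k) * s k) • y) - g x) / (r (j k) * s k)) < ε / 2 := by
      rw [key, Real.dist_eq, div_sub_div_same, abs_div, abs_of_pos hsk,
        div_lt_iff₀ hsk]
      have : |f (s k • y) - (g (x + r (j k) • (s k • y)) - g x) / r (j k)| < s k / (k + 1) := by
        rw [← Real.dist_eq]; exact ht2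
      have hlt : s k / (k + 1) ≤ ε / 2 * s k := by
        have h4 : (1 : ℝ) / (k + 1) * s k < ε / 2 * s k :=
          mul_lt_mul_of_pos_right hk3 hsk
        rw [div_mul_eq_mul_div, one_mul] at h4
        linarith
      linarith
    calc dist (h y) ((g (x + (r (j k) * s k) • y) - g x) / (r (j k) * s k))
        ≤ dist (h y) (f (s k • y) / s k)
          + dist (f (s k • y) / s k)
            ((g (x + (r (j k) * s k) • y) - g x) / (r (j k) * s k)) := dist_triangle _ _ _
      _ < ε / 2 + ε / 2 := by exact add_lt_add ht1 ht2'
      _ = ε := by ring
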